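/- Let f be a C¹ diffeomorphism of a compact manifold M with an invariant splitting TM = E^{cs} ⊕ E^{cu}, and consider the suspension flow (φ_t) with constant roof 1 on the suspension manifold M̃. If f has a hyperbolic periodic point p with an expanding direction contained in E^{cs}_p, and a hyperbolic periodic point q with a contracting direction contained in E^{cu}_q, then the naturally induced flow-invariant splitting T M̃ = Ẽ^{cs} ⊕ (Ẽ^{cu} ⊕ ℝ·X) is not dominated. -/
import Mathlib


/-- Product of the linear cocycle `B` over `f` along the orbit of `x`. -/
noncomputable def cocycleIter {M W : Type*} [NormedAddCommGroup W] [NormedSpace ℝ W]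
    (B : M → (W →L[ℝ] W)) (f : M → M) (x : M) : ℕ → (W →L[ℝ] W)
  | 0 => ContinuousLinearMap.id ℝ W
  | n + 1 => (B (f^[n] x)).comp (cocycleIter B f x n)

lemma cocycleIter_add {M W : Type*} [NormedAddCommGroup W] [NormedSpace ℝ W]
    (B : M → (W →L[ℝ] W)) (f : M → M) (x : M) (n j : ℕ) :
    cocycleIter B f x (n + j) = (cocycleIter B f (f^[n] x) j).comp (cocycleIter B f x n) := by
  induction j with
  | zero => simp [cocycleIter]
  | succ j ih =>
    show cocycleIter B f x (n + j + 1) = _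
    rw [cocycleIter, ih]
    have : f^[n + j] x = f^[j] (f^[n] x) := by
      rw [Nat.add_comm, Function.iterate_add_apply]
    rw [this]
    rfl

/-! Statement 19: Let `f` be a diffeomorphism with derivative cocycle `A = Df` and an
invariant splitting `TM = E^{cs} ⊕ E^{cu}`.  Suppose `f` has a hyperbolic periodic
point `p` (period `m`) with an expanding direction inside `E^{cs}_p` and a hyperbolic
periodic point `q` (period `k`) with a contracting direction inside `E^{cu}_q`.  For the
suspension flow with constant roof `1`, the tangent space along the base slice is
`V × ℝ` (the extra `ℝ` is the flow direction), the derivative of the time-one map is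
`B x (v,s) = (A x v, s)`, and the induced flow-invariant splitting is
`Ẽ^{cs} = E^{cs} × 0`, `Ẽ^{cu} ⊕ ℝ·X = E^{cu} × ℝ`.  This splitting is not dominated. -/

theorem suspension_splitting_not_dominated
    {M V : Type*} [NormedAddCommGroup V] [NormedSpace ℝ V] [FiniteDimensional ℝ V]
    (f : M → M) (A : M → (V ≃L[ℝ] V))
    (Ecs Ecu : M → Submodule ℝ V)
    (hcompl : ∀ x, IsCompl (Ecs x) (Ecu x))
    (hcsinv : ∀ x, ∀ v ∈ Ecs x, A x v ∈ Ecs (f x))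
    (hcuinv : ∀ x, ∀ v ∈ Ecu x, A x v ∈ Ecu (f x))
    -- hyperbolic periodic point p with an expanding eigendirection inside E^{cs}
    (p : M) (m : ℕ) (hm : 0 < m) (hp : f^[m] p = p)
    (v : V) (hv : v ∈ Ecs p) (hvne : v ≠ 0) (c : ℝ) (hc : 1 < |c|)
    (heigp : cocycleIter (fun x => (A x : V →L[ℝ] V)) f p m v = c • v)
    -- hyperbolic periodic point q with a contracting eigendirection inside E^{cu}
    (q : M) (k : ℕ) (hk : 0 < k) (hq : f^[k] q = q)
    (w : V) (hw : w ∈ Ecu q) (hwne : w ≠ 0) (c' : ℝ) (hc'0 : c' ≠ 0) (hc' : |c'| < 1)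
    (heigq : cocycleIter (fun x => (A x : V →L[ℝ] V)) f q k w = c' • w)
    -- the derivative cocycle of the time-one suspension map on V × ℝ
    (B : M → ((V × ℝ) →L[ℝ] (V × ℝ)))
    (hB : ∀ x (u : V) (s : ℝ), B x (u, s) = (A x u, s)) :
    ¬ ∃ C lam : ℝ, 0 < C ∧ 0 < lam ∧
      ∀ (x : M) (n : ℕ),
        ∀ u ∈ (Ecs x).prod (⊥ : Submodule ℝ ℝ),
        ∀ z ∈ (Ecu x).prod (⊤ : Submodule ℝ ℝ),
          ‖cocycleIter B f x n u‖ * ‖z‖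
            ≤ C * Real.exp (-lam * n) * ‖u‖ * ‖cocycleIter B f x n z‖ := by
  rintro ⟨C, lam, hC, hlam, hdom⟩
  set A' : M → (V →L[ℝ] V) := fun x => (A x : V →L[ℝ] V) with hA'
  -- the cocycle B acts as (A' , id) on the product
  have hBiter : ∀ (x : M) (n : ℕ) (u : V) (s : ℝ),
      cocycleIter B f x n (u, s) = (cocycleIter A' f x n u, s) := by
    intro x n
    induction n with
    | zero => intro u s; rfl
    | succ n ih =>
      intro u s
      show (B (f^[n] x)) (cocycleIter B f x n (u, s)) = _
      rw [ih, hB]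
      rfl
  -- periodic orbit: f^[m*j] p = p
  have hper : ∀ j : ℕ, f^[m * j] p = p := by
    intro j
    rw [Function.iterate_mul]
    exact Function.iterate_fixed hp j
  -- eigenvector iterates
  have heig : ∀ j : ℕ, cocycleIter A' f p (m * j) v = c ^ j • v := by
    intro j
    induction j with
    | zero => simp [cocycleIter]
    | succ j ih =>
      have : m * (j + 1) = m * j + m := by ring
      rw [this, cocycleIter_add, ContinuousLinearMap.comp_apply, ih, hper j, map_smul,
        heigp, smul_smul]
      ring_nf
  -- choose j large
  have hlm : (0:ℝ) < lam * m := by positivity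
  obtain ⟨j, hj⟩ := exists_nat_gt (C / (lam * m))
  have hjC : C < lam * (m * j) + 1 := by
    have : C = C / (lam * m) * (lam * m) := by field_simp
    rw [this]
    have h1 : C / (lam * m) * (lam * m) < j * (lam * m) :=
      mul_lt_mul_of_pos_right hj hlm
    nlinarith
  -- apply domination at x = p, n = m*j, u = (v,0), z = (0,1)
  have humem : ((v, (0:ℝ)) : V × ℝ) ∈ (Ecs p).prod (⊥ : Submodule ℝ ℝ) :=
    Submodule.mem_prod.2 ⟨hv, Submodule.zero_mem _⟩
  have hzmem : (((0:V), (1:ℝ)) : V × ℝ) ∈ (Ecu p).prod (⊤ : Submodule ℝ ℝ) :=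
    Submodule.mem_prod.2 ⟨Submodule.zero_mem _, trivial⟩
  have key := hdom p (m * j) (v, 0) humem ((0:V), (1:ℝ)) hzmem
  rw [hBiter, hBiter, heig j, map_zero] at key
  have hnz : ‖((0:V), (1:ℝ))‖ = 1 := by
    simp [Prod.norm_def]
  have hnu : ‖((v, (0:ℝ)) : V × ℝ)‖ = ‖v‖ := by
    simp [Prod.norm_def]
  have hncu : ‖((c ^ j • v, (0:ℝ)) : V × ℝ)‖ = |c| ^ j * ‖v‖ := by
    simp only [Prod.norm_def, norm_zero, norm_smul, Real.norm_eq_abs, abs_pow]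
    exact max_eq_left (by positivity)
  rw [hnz, hnu, hncu] at key
  push_cast at key
  have hvpos : 0 < ‖v‖ := norm_pos_iff.2 hvne
  have key2 : |c| ^ j ≤ C * Real.exp (-lam * (m * j)) := by
    rw [mul_one, mul_one] at key
    exact le_of_mul_le_mul_right key hvpos
  have hcj : (1:ℝ) ≤ |c| ^ j := one_le_pow₀ hc.le
  have h1 : (1:ℝ) ≤ C * Real.exp (-lam * (m * j)) := le_trans hcj key2
  have hexp : Real.exp (lam * (m * j)) ≤ C := by
    have he : Real.exp (-lam * (m * j)) = (Real.exp (lam * (m * j)))⁻¹ := by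
      rw [← Real.exp_neg]; ring_nf
    rw [he] at h1
    have hep : 0 < Real.exp (lam * (m * j)) := Real.exp_pos _
    calc Real.exp (lam * (m * j)) = 1 * Real.exp (lam * (m * j)) := (one_mul _).symm
      _ ≤ C * (Real.exp (lam * (m * j)))⁻¹ * Real.exp (lam * (m * j)) :=
          mul_le_mul_of_nonneg_right h1 hep.le
      _ = C := by field_simp
  have hge : lam * (m * j) + 1 ≤ Real.exp (lam * (m * j)) := by
    have := Real.add_one_le_exp (lam * (m * j))
    linarith
  linarith
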